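/- Let |Ψ⟩ = Σ_{p∈P} α_p |p⟩|ψ_p⟩ with the |p⟩ mutually orthonormal and each |ψ_p⟩ a unit vector, Σ_p |α_p|² = 1. Let R ⊆ P, α = Σ_{p∉R} |α_p|², assume α < 1, and let |Ψ̃⟩ = (1−α)^{−1/2} Σ_{p∈R} α_p |p⟩|ψ_p⟩. If |Ψ⟩ is a ground state of a positive semidefinite Hermitian H with ⟨Ψ|H|Ψ⟩ = E₀ ≥ 0, then ⟨Ψ̃|H|Ψ̃⟩ − ⟨Ψ|H|Ψ⟩ ≤ (2/(1−α)) · Σ_{p∈R} Σ_{p'∈P∖R} |α_p| |α_{p'}| |⟨p|⟨ψ_p| H |p'⟩|ψ_{p'}⟩|. -/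

import Mathlib

/-!
Split `Ψ = x + y` into the kept part `x = ∑_{p ∈ R} α_p e_p` and the deleted part
`y = ∑_{p ∉ R} α_p e_p`, which are orthogonal with `‖x‖² = 1 - a`. Pairing the eigenvalue equation
`H (x + y) = E₀ (x + y)` with `x` gives `⟪x, H x⟫ = E₀ (1 - a) - ⟪x, H y⟫`, and the cross term
`⟪x, H y⟫` is bounded termwise. Rescaling `x` to a unit vector divides its energy by `1 - a`.
-/

open Finset
open scoped InnerProductSpace

section InnerProductSpace

variable {𝕜 E ι F : Type*} [RCLike 𝕜] [NormedAddCommGroup E] [InnerProductSpace 𝕜 E]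
  [FunLike F E E] [LinearMapClass F 𝕜 E E]

theorem Orthonormal.inner_sum_smul_eq_zero_of_disjoint {v : ι → E} (hv : Orthonormal 𝕜 v)
    (l₁ l₂ : ι → 𝕜) {s t : Finset ι} (hst : Disjoint s t) :
    ⟪∑ i ∈ s, l₁ i • v i, ∑ j ∈ t, l₂ j • v j⟫_𝕜 = 0 := by
  simp_rw [sum_inner, inner_sum, inner_smul_left, inner_smul_right]
  refine sum_eq_zero fun i hi => sum_eq_zero fun j hj => ?_
  have hij : i ≠ j := fun h => disjoint_left.mp hst hi (h ▸ hj)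
  rw [hv.inner_eq_zero hij, mul_zero, mul_zero]

theorem Orthonormal.norm_sum_smul_sq {v : ι → E} (hv : Orthonormal 𝕜 v) (l : ι → 𝕜)
    (s : Finset ι) : ‖∑ i ∈ s, l i • v i‖ ^ 2 = ∑ i ∈ s, ‖l i‖ ^ 2 := by
  apply RCLike.ofReal_injective (K := 𝕜)
  push_cast
  rw [← inner_self_eq_norm_sq_to_K, hv.inner_sum]
  simp only [RCLike.conj_mul]

theorem norm_inner_sum_smul_map_sum_smul_le (T : F) (v : ι → E) (l₁ l₂ : ι → 𝕜)
    (s t : Finset ι) :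
    ‖⟪∑ i ∈ s, l₁ i • v i, T (∑ j ∈ t, l₂ j • v j)⟫_𝕜‖
      ≤ ∑ i ∈ s, ∑ j ∈ t, ‖l₁ i‖ * ‖l₂ j‖ * ‖⟪v i, T (v j)⟫_𝕜‖ := by
  simp_rw [map_sum, map_smul, sum_inner, inner_sum, inner_smul_left, inner_smul_right]
  refine (norm_sum_le _ _).trans (sum_le_sum fun i _ => ?_)
  refine (norm_sum_le _ _).trans (sum_le_sum fun j _ => ?_)
  rw [norm_mul, norm_mul, RCLike.norm_conj, mul_assoc]

theorem inner_map_self_eq_of_map_add_eq_smul (T : F) {x y : E} {μ : 𝕜}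
    (hxy : ⟪x, y⟫_𝕜 = 0) (hT : T (x + y) = μ • (x + y)) :
    ⟪x, T x⟫_𝕜 = μ * (‖x‖ : 𝕜) ^ 2 - ⟪x, T y⟫_𝕜 := by
  have hTx : T x = μ • (x + y) - T y := by rw [← hT, map_add, add_sub_cancel_right]
  rw [hTx, inner_sub_right, inner_smul_right, inner_add_right, hxy, add_zero,
    inner_self_eq_norm_sq_to_K]

theorem inner_ofReal_smul_map_ofReal_smul (T : F) (r : ℝ) (x : E) :
    ⟪(r : 𝕜) • x, T ((r : 𝕜) • x)⟫_𝕜 = ((r ^ 2 : ℝ) : 𝕜) * ⟪x, T x⟫_𝕜 := by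
  rw [map_smul, inner_smul_left, inner_smul_right, RCLike.conj_ofReal, ← mul_assoc]
  push_cast
  ring

end InnerProductSpace

theorem stmt_7_general {P : Type*} [Fintype P] [DecidableEq P]
    {E : Type*} [NormedAddCommGroup E] [InnerProductSpace ℂ E]
    (e : P → E) (he : Orthonormal ℂ e)
    (α : P → ℂ) (hα : ∑ p, ‖α p‖ ^ 2 = 1)
    (R : Finset P) (a : ℝ) (ha : a = ∑ p ∈ Rᶜ, ‖α p‖ ^ 2) (ha1 : a < 1)
    (H : E →L[ℂ] E)
    (E₀ : ℝ)
    (hval : (inner ℂ (∑ p, α p • e p) (H (∑ p, α p • e p)) : ℂ).re = E₀)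
    (hground : H (∑ p, α p • e p) = (E₀ : ℂ) • ∑ p, α p • e p) :
    (inner ℂ (((Real.sqrt (1 - a) : ℂ))⁻¹ • ∑ p ∈ R, α p • e p)
        (H (((Real.sqrt (1 - a) : ℂ))⁻¹ • ∑ p ∈ R, α p • e p)) : ℂ).re
      - (inner ℂ (∑ p, α p • e p) (H (∑ p, α p • e p)) : ℂ).re
    ≤ (2 / (1 - a)) * ∑ p ∈ R, ∑ p' ∈ Rᶜ,
        ‖α p‖ * ‖α p'‖ * ‖(inner ℂ (e p) (H (e p')) : ℂ)‖ := by
  set x := ∑ p ∈ R, α p • e p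
  set y := ∑ p ∈ Rᶜ, α p • e p
  set S := ∑ p ∈ R, ∑ p' ∈ Rᶜ, ‖α p‖ * ‖α p'‖ * ‖(inner ℂ (e p) (H (e p')) : ℂ)‖
  have h1a : 0 < 1 - a := by linarith
  have hsplit : x + y = ∑ p, α p • e p := sum_add_sum_compl R _
  have hxy : ⟪x, y⟫_ℂ = 0 := he.inner_sum_smul_eq_zero_of_disjoint α α disjoint_compl_right
  have hx : ‖x‖ ^ 2 = 1 - a := by
    rw [he.norm_sum_smul_sq, ha, ← hα, ← sum_add_sum_compl R]
    ring
  have hkept : (⟪x, H x⟫_ℂ).re ≤ E₀ * (1 - a) + S := by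
    have hcross := norm_inner_sum_smul_map_sum_smul_le H e α α R Rᶜ
    rw [inner_map_self_eq_of_map_add_eq_smul H hxy (hsplit ▸ hground),
      RCLike.ofReal_eq_complex_ofReal, Complex.sub_re, ← Complex.ofReal_pow, ← Complex.ofReal_mul,
      Complex.ofReal_re, hx]
    linarith [neg_abs_le (⟪x, H y⟫_ℂ).re, Complex.abs_re_le_norm ⟪x, H y⟫_ℂ]
  have hscale : (inner ℂ (((Real.sqrt (1 - a) : ℂ))⁻¹ • x) (H (((Real.sqrt (1 - a) : ℂ))⁻¹ • x))).re
      = (1 - a)⁻¹ * (⟪x, H x⟫_ℂ).re := by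
    rw [← Complex.ofReal_inv, ← RCLike.ofReal_eq_complex_ofReal, inner_ofReal_smul_map_ofReal_smul,
      RCLike.ofReal_eq_complex_ofReal, Complex.re_ofReal_mul, inv_pow,
      Real.sq_sqrt h1a.le]
  have hS : 0 ≤ S := by positivity
  rw [hscale, hval]
  calc (1 - a)⁻¹ * (⟪x, H x⟫_ℂ).re - E₀ ≤ (1 - a)⁻¹ * (E₀ * (1 - a) + S) - E₀ := by gcongr
    _ = S / (1 - a) := by field_simp; ring
    _ ≤ 2 / (1 - a) * S := by rw [div_mul_eq_mul_div]; gcongr; linarith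

/-- Truncating the initial part of a history state changes the energy by at most the
cross terms between the kept and deleted parts. -/
theorem stmt_7 {P : Type*} [Fintype P] [DecidableEq P]
    {E : Type*} [NormedAddCommGroup E] [InnerProductSpace ℂ E]
    (e : P → E) (he : Orthonormal ℂ e)
    (α : P → ℂ) (hα : ∑ p, ‖α p‖ ^ 2 = 1)
    (R : Finset P) (a : ℝ) (ha : a = ∑ p ∈ Rᶜ, ‖α p‖ ^ 2) (ha1 : a < 1)
    (H : E →L[ℂ] E)
    (hsa : ∀ x y : E, (inner ℂ (H x) y : ℂ) = inner ℂ x (H y))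
    (hpsd : ∀ x : E, 0 ≤ (inner ℂ x (H x) : ℂ).re)
    (E₀ : ℝ) (hE₀ : 0 ≤ E₀)
    (hval : (inner ℂ (∑ p, α p • e p) (H (∑ p, α p • e p)) : ℂ).re = E₀)
    (hground : H (∑ p, α p • e p) = (E₀ : ℂ) • ∑ p, α p • e p)
    (hmin : ∀ x : E, E₀ * ‖x‖ ^ 2 ≤ (inner ℂ x (H x) : ℂ).re) :
    (inner ℂ (((Real.sqrt (1 - a) : ℂ))⁻¹ • ∑ p ∈ R, α p • e p)
        (H (((Real.sqrt (1 - a) : ℂ))⁻¹ • ∑ p ∈ R, α p • e p)) : ℂ).re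
      - (inner ℂ (∑ p, α p • e p) (H (∑ p, α p • e p)) : ℂ).re
    ≤ (2 / (1 - a)) * ∑ p ∈ R, ∑ p' ∈ Rᶜ,
        ‖α p‖ * ‖α p'‖ * ‖(inner ℂ (e p) (H (e p')) : ℂ)‖ :=
  stmt_7_general e he α hα R a ha ha1 H E₀ hval hground
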